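/- arXiv:2007.03724 — 6 statements merged into one kernel-verified Lean document; each statement's English description precedes it below -/
import Mathlib

section
/- Let H be a real inner product space, let Z ⊆ H be a convex set, let λ > 0, and let φ₁, φ₂ : H → ℝ be differentiable functions each of which is λ-strongly concave on Z. Suppose z₁ ∈ Z maximizes φ₁ over Z and z₂ ∈ Z maximizes φ₂ over Z. Then λ·‖z₂ − z₁‖ ≤ ‖∇φ₂(z₁) − ∇φ₁(z₁)‖. (This is the key inequality in the proof of Lemma 1: the maximizer of a strongly concave objective moves at most proportionally to the perturbation of its gradient.) -/
open InnerProductSpace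

open scoped RealInnerProductSpace

section Aux

variable {H : Type*} [NormedAddCommGroup H] [InnerProductSpace ℝ H] [CompleteSpace H]

/-- fderiv in terms of gradient. -/
lemma fderiv_eq_inner_gradient (f : H → ℝ) (x : H) (hf : DifferentiableAt ℝ f x) (v : H) :
    fderiv ℝ f x v = ⟪gradient f x, v⟫ := by
  have h := hf.hasGradientAt
  rw [hasGradientAt_iff_hasFDerivAt] at h
  rw [h.fderiv]
  simp [toDualMap_apply_apply]

/-- Tangent-line upper bound for a concave function. -/
lemma ConcaveOn.le_add_fderiv {Z : Set H} {g : H → ℝ} (hg : ConcaveOn ℝ Z g)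
    (hd : Differentiable ℝ g) {x y : H} (hx : x ∈ Z) (hy : y ∈ Z) :
    g y ≤ g x + fderiv ℝ g x (y - x) := by
  set h : ℝ → ℝ := fun t => g (x + t • (y - x)) with hh
  have hL : ∀ t : ℝ, HasDerivAt (fun s : ℝ => x + s • (y - x)) (y - x) t := by
    intro t
    simpa using ((hasDerivAt_id t).smul_const (y - x)).const_add x
  have hderiv : HasDerivAt h (fderiv ℝ g x (y - x)) 0 := by
    have := (hd (x + (0:ℝ) • (y - x))).hasFDerivAt.comp_hasDerivAt 0 (hL 0)
    simpa [hh, Function.comp_def] using this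
  have hslope : ∀ t ∈ Set.Ioc (0 : ℝ) 1, g y - g x ≤ slope h 0 t := by
    intro t ht
    have hmem : x + t • (y - x) = (1 - t) • x + t • y := by
      rw [sub_smul, one_smul, smul_sub]; abel
    have hc := hg.2 hy hx ht.1.le (by linarith [ht.2]) (by ring : t + (1 - t) = 1)
    have : (1 - t) * g x + t * g y ≤ h t := by
      have : t • y + (1 - t) • x = x + t • (y - x) := by rw [hmem]; abel
      rw [this] at hc
      simpa [hh, smul_eq_mul, mul_comm, add_comm] using hc
    have h0 : h 0 = g x := by simp [hh]
    rw [slope_def_field, sub_zero, le_div_iff₀ ht.1]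
    nlinarith [this, h0]
  have htend : Filter.Tendsto (slope h 0) (nhdsWithin 0 (Set.Ioi 0))
      (nhds (fderiv ℝ g x (y - x))) := by
    have := hasDerivAt_iff_tendsto_slope.mp hderiv
    exact this.mono_left (nhdsWithin_mono 0 (fun t ht => ne_of_gt ht))
  have : g y - g x ≤ fderiv ℝ g x (y - x) := by
    refine ge_of_tendsto htend ?_
    filter_upwards [Ioc_mem_nhdsGT_of_mem (Set.mem_Ico.mpr ⟨le_refl 0, one_pos⟩)] with t ht
    exact hslope t ht
  linarith

/-- Tangent-line upper bound for a strongly concave function. -/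
lemma strong_tangent_bound {Z : Set H} {f : H → ℝ} {m : ℝ}
    (hf : StrongConcaveOn Z m f) (hd : Differentiable ℝ f) {x y : H} (hx : x ∈ Z) (hy : y ∈ Z) :
    f y + m / 2 * ‖y - x‖ ^ 2 ≤ f x + ⟪gradient f x, y - x⟫ := by
  rw [strongConcaveOn_iff_convex] at hf
  set g : H → ℝ := fun z => f z + m / 2 * ‖z‖ ^ 2 with hg
  have hnsq : ∀ z : H, HasFDerivAt (fun w : H => ‖w‖ ^ (2:ℕ))
      ((fderivInnerCLM ℝ (z, z)).comp ((ContinuousLinearMap.id ℝ H).prod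
        (ContinuousLinearMap.id ℝ H))) z := by
    intro z
    have h1 : HasFDerivAt (fun w : H => ⟪w, w⟫)
        ((fderivInnerCLM ℝ (z, z)).comp ((ContinuousLinearMap.id ℝ H).prod
          (ContinuousLinearMap.id ℝ H))) z :=
      (hasFDerivAt_id z).inner ℝ (hasFDerivAt_id z)
    have : (fun w : H => ⟪w, w⟫) = fun w : H => ‖w‖ ^ (2:ℕ) := by
      funext w; exact real_inner_self_eq_norm_sq w
    rwa [this] at h1
  have hdg : Differentiable ℝ g := by
    intro z
    exact (hd z).add (((hnsq z).differentiableAt).const_mul _)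
  have key := hg ▸ ConcaveOn.le_add_fderiv hf hdg hx hy
  have hfderiv : fderiv ℝ g x (y - x) = ⟪gradient f x, y - x⟫ + m * ⟪x, y - x⟫ := by
    have h2 : HasFDerivAt g (fderiv ℝ f x + (m/2) •
        ((fderivInnerCLM ℝ (x, x)).comp ((ContinuousLinearMap.id ℝ H).prod
          (ContinuousLinearMap.id ℝ H)))) x :=
      (hd x).hasFDerivAt.add ((hnsq x).const_smul (m/2))
    rw [h2.fderiv]
    have := fderiv_eq_inner_gradient f x (hd x) (y - x)
    simp only [ContinuousLinearMap.add_apply, ContinuousLinearMap.coe_smul',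
      Pi.smul_apply, ContinuousLinearMap.coe_comp', Function.comp_apply,
      ContinuousLinearMap.prod_apply, ContinuousLinearMap.coe_id', id_eq,
      fderivInnerCLM_apply, smul_eq_mul, this]
    have : ⟪x, y - x⟫ + ⟪y - x, x⟫ = 2 * ⟪x, y - x⟫ := by
      rw [real_inner_comm (y - x) x]; ring
    rw [this]; ring
  rw [hfderiv] at key
  have hexp : ‖y - x‖ ^ 2 = ‖y‖ ^ 2 - 2 * ⟪x, y - x⟫ - ‖x‖ ^ 2 := by
    have h1 : ‖y - x‖ ^ 2 = ⟪y - x, y - x⟫ := (real_inner_self_eq_norm_sq _).symm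
    have h2 : ‖y‖ ^ 2 = ⟪y, y⟫ := (real_inner_self_eq_norm_sq _).symm
    have h3 : ‖x‖ ^ 2 = ⟪x, x⟫ := (real_inner_self_eq_norm_sq _).symm
    rw [h1, h2, h3]
    simp only [inner_sub_left, inner_sub_right]
    rw [real_inner_comm y x]
    ring
  simp only [hg] at key
  rw [hexp]
  linarith [key]

/-- First-order optimality condition. -/
lemma foc {Z : Set H} (hZ : Convex ℝ Z) {f : H → ℝ} (hd : Differentiable ℝ f)
    {x y : H} (hx : x ∈ Z) (hy : y ∈ Z) (hmax : ∀ ζ ∈ Z, f ζ ≤ f x) :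
    ⟪gradient f x, y - x⟫ ≤ 0 := by
  have hloc : IsLocalMaxOn f Z x :=
    eventually_nhdsWithin_of_forall (fun z hz => hmax z hz)
  have hcone : y - x ∈ posTangentConeAt Z x :=
    sub_mem_posTangentConeAt_of_segment_subset (hZ.segment_subset hx hy)
  have hle := hloc.hasFDerivWithinAt_nonpos ((hd x).hasFDerivAt.hasFDerivWithinAt) hcone
  rw [← fderiv_eq_inner_gradient f x (hd x) (y - x)]
  exact hle

end Aux

/-- Key inequality in the proof of Lemma 1: for two `λ`-strongly concave differentiable
functions on a convex set `Z`, the distance between their maximizers over `Z` is bounded by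
`(1/λ)` times the norm of the difference of their gradients at one maximizer. -/
theorem maximizer_perturbation_bound
    {H : Type*} [NormedAddCommGroup H] [InnerProductSpace ℝ H] [CompleteSpace H]
    (Z : Set H) (hZ : Convex ℝ Z) (lam : ℝ) (hlam : 0 < lam)
    (φ₁ φ₂ : H → ℝ) (hφ₁ : Differentiable ℝ φ₁) (hφ₂ : Differentiable ℝ φ₂)
    (hsc₁ : StrongConcaveOn Z lam φ₁) (hsc₂ : StrongConcaveOn Z lam φ₂)
    (z₁ z₂ : H) (hz₁ : z₁ ∈ Z) (hz₂ : z₂ ∈ Z)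
    (hmax₁ : ∀ ζ ∈ Z, φ₁ ζ ≤ φ₁ z₁) (hmax₂ : ∀ ζ ∈ Z, φ₂ ζ ≤ φ₂ z₂) :
    lam * ‖z₂ - z₁‖ ≤ ‖gradient φ₂ z₁ - gradient φ₁ z₁‖ := by
  set d := z₂ - z₁ with hd
  have h1 : ⟪gradient φ₁ z₁, d⟫ ≤ 0 := foc hZ hφ₁ hz₁ hz₂ hmax₁
  have h2 : ⟪gradient φ₂ z₂, z₁ - z₂⟫ ≤ 0 := foc hZ hφ₂ hz₂ hz₁ hmax₂
  have h3 := strong_tangent_bound hsc₂ hφ₂ hz₁ hz₂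
  have h4 := strong_tangent_bound hsc₂ hφ₂ hz₂ hz₁
  have hnorm : ‖z₁ - z₂‖ = ‖d‖ := by rw [hd, norm_sub_rev]
  rw [hnorm] at h4
  -- h3 : φ₂ z₂ + lam/2 ‖d‖² ≤ φ₂ z₁ + ⟪∇φ₂ z₁, d⟫
  -- h4 : φ₂ z₁ + lam/2 ‖d‖² ≤ φ₂ z₂ + ⟪∇φ₂ z₂, z₁ - z₂⟫ ≤ φ₂ z₂
  have key : lam * ‖d‖ ^ 2 ≤ ⟪gradient φ₂ z₁ - gradient φ₁ z₁, d⟫ := by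
    rw [inner_sub_left]
    nlinarith [h1, h2, h3, h4]
  have hcs : ⟪gradient φ₂ z₁ - gradient φ₁ z₁, d⟫ ≤
      ‖gradient φ₂ z₁ - gradient φ₁ z₁‖ * ‖d‖ := real_inner_le_norm _ _
  rcases eq_or_lt_of_le (norm_nonneg d) with h0 | h0
  · rw [← h0]; simp [norm_nonneg]
  · have : lam * ‖d‖ * ‖d‖ ≤ ‖gradient φ₂ z₁ - gradient φ₁ z₁‖ * ‖d‖ := by
      nlinarith [key, hcs]
    exact le_of_mul_le_mul_right this h0
end

section
/- Let Z ⊆ ℝ^d be a convex set and λ > 0. Let ℓ : ℝ^p × ℝ^d → ℝ be differentiable in its second argument with cross-Lipschitz constant L_zθ, i.e. ‖∇_ζ ℓ(θ₁, ζ) − ∇_ζ ℓ(θ₂, ζ)‖ ≤ L_zθ·‖θ₁ − θ₂‖ for all θ₁, θ₂ ∈ ℝ^p and ζ ∈ ℝ^d. Let c : ℝ^d → ℝ be differentiable with ‖∇c(ζ)‖ ≤ L_c for all ζ. Fix ρ ∈ ℝ. For i = 1, 2, let θ_i ∈ ℝ^p and γ_i ∈ ℝ, suppose the function ψ_i(ζ)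 := ℓ(θ_i, ζ) + γ_i·(ρ − c(ζ)) is λ-strongly concave on Z, and let ζ_i ∈ Z maximize ψ_i over Z. Then ‖ζ₁ − ζ₂‖ ≤ (L_zθ/λ)·‖θ₁ − θ₂‖ + (L_c/λ)·|γ₁ − γ₂|. (Lemma 1, inequality (12a) of the paper.) -/
open Filter Topology InnerProductSpace

lemma strongConcave_max_gap {E : Type*} [NormedAddCommGroup E] [NormedSpace ℝ E]
    {Z : Set E} {lam : ℝ} {f : E → ℝ}
    (hsc : StrongConcaveOn Z lam f) {x y : E} (hx : x ∈ Z) (hy : y ∈ Z)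
    (hmax : ∀ z ∈ Z, f z ≤ f x) :
    f y + lam / 2 * ‖x - y‖ ^ 2 ≤ f x := by
  have h : ∀ t : ℝ, 0 < t → t < 1 → f y + (1 - t) * (lam / 2 * ‖y - x‖ ^ 2) ≤ f x := by
    intro t ht ht1
    have hmem : t • y + (1 - t) • x ∈ Z := hsc.1 hy hx ht.le (by linarith) (by ring)
    have h2 := hsc.2 hy hx ht.le (by linarith : (0:ℝ) ≤ 1 - t) (by ring)
    have h3 := hmax _ hmem
    have := h2.trans h3
    simp only [smul_eq_mul] at this
    nlinarith
  have hyx : ‖y - x‖ = ‖x - y‖ := norm_sub_rev _ _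
  rw [← hyx]
  have htend : Tendsto (fun t : ℝ => f y + (1 - t) * (lam / 2 * ‖y - x‖ ^ 2)) (𝓝[>] 0)
      (𝓝 (f y + lam / 2 * ‖y - x‖ ^ 2)) := by
    have : Tendsto (fun t : ℝ => f y + (1 - t) * (lam / 2 * ‖y - x‖ ^ 2)) (𝓝 0)
        (𝓝 (f y + (1 - 0) * (lam / 2 * ‖y - x‖ ^ 2))) := by
      exact ((continuous_const.add ((continuous_const.sub continuous_id).mul
        continuous_const)).tendsto 0)
    simpa using this.mono_left nhdsWithin_le_nhds
  refine le_of_tendsto htend ?_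
  filter_upwards [Ioo_mem_nhdsGT_of_mem (by norm_num : (0:ℝ) ∈ Set.Ico (0:ℝ) 1)] with t ht
  exact h t ht.1 ht.2

/-- Lemma 1, inequality (12a): the maximizer `ζ(θ, γ)` of the perturbed loss
`ζ ↦ ℓ(θ, ζ) + γ (ρ - c(ζ))` over `Z` is Lipschitz in `(θ, γ)` with constants
`L_zθ / λ` and `L_c / λ`. -/
theorem maximizer_lipschitz_in_theta_gamma
    {p d : ℕ} (Z : Set (EuclideanSpace ℝ (Fin d))) (hZ : Convex ℝ Z)
    (lam : ℝ) (hlam : 0 < lam)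
    (ℓ : EuclideanSpace ℝ (Fin p) → EuclideanSpace ℝ (Fin d) → ℝ)
    (hdiff : ∀ θ, Differentiable ℝ (ℓ θ))
    (Lzθ : ℝ)
    (hcross : ∀ θ₁ θ₂ ζ, ‖gradient (ℓ θ₁) ζ - gradient (ℓ θ₂) ζ‖ ≤ Lzθ * ‖θ₁ - θ₂‖)
    (c : EuclideanSpace ℝ (Fin d) → ℝ) (hc : Differentiable ℝ c)
    (Lc : ℝ) (hLc : ∀ ζ, ‖gradient c ζ‖ ≤ Lc)
    (ρ : ℝ) (θ₁ θ₂ : EuclideanSpace ℝ (Fin p)) (γ₁ γ₂ : ℝ)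
    (hsc₁ : StrongConcaveOn Z lam (fun ζ => ℓ θ₁ ζ + γ₁ * (ρ - c ζ)))
    (hsc₂ : StrongConcaveOn Z lam (fun ζ => ℓ θ₂ ζ + γ₂ * (ρ - c ζ)))
    (ζ₁ ζ₂ : EuclideanSpace ℝ (Fin d)) (hζ₁ : ζ₁ ∈ Z) (hζ₂ : ζ₂ ∈ Z)
    (hmax₁ : ∀ ζ ∈ Z, ℓ θ₁ ζ + γ₁ * (ρ - c ζ) ≤ ℓ θ₁ ζ₁ + γ₁ * (ρ - c ζ₁))
    (hmax₂ : ∀ ζ ∈ Z, ℓ θ₂ ζ + γ₂ * (ρ - c ζ) ≤ ℓ θ₂ ζ₂ + γ₂ * (ρ - c ζ₂)) :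
    ‖ζ₁ - ζ₂‖ ≤ (Lzθ / lam) * ‖θ₁ - θ₂‖ + (Lc / lam) * |γ₁ - γ₂| := by
  set K : ℝ := Lzθ * ‖θ₁ - θ₂‖ + Lc * |γ₁ - γ₂| with hK
  have hK1 : 0 ≤ Lzθ * ‖θ₁ - θ₂‖ := (norm_nonneg _).trans (hcross θ₁ θ₂ 0)
  have hLc0 : 0 ≤ Lc := (norm_nonneg _).trans (hLc 0)
  have hK2 : 0 ≤ Lc * |γ₁ - γ₂| := mul_nonneg hLc0 (abs_nonneg _)
  -- the difference function
  set g : EuclideanSpace ℝ (Fin d) → ℝ :=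
    fun ζ => ℓ θ₁ ζ - ℓ θ₂ ζ - (γ₁ - γ₂) * c ζ with hg
  have hgd : Differentiable ℝ g := ((hdiff θ₁).sub (hdiff θ₂)).sub (hc.const_mul _)
  -- bound on the gradient of g
  have hgrad : ∀ x, ‖fderiv ℝ g x‖ ≤ K := by
    intro x
    have h1 : fderiv ℝ g x = fderiv ℝ (ℓ θ₁) x - fderiv ℝ (ℓ θ₂) x
        - (γ₁ - γ₂) • fderiv ℝ c x := by
      rw [hg]
      rw [fderiv_fun_sub (f := fun ζ => ℓ θ₁ ζ - ℓ θ₂ ζ) (((hdiff θ₁).sub (hdiff θ₂)) x) ((hc.const_mul _) x),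
        fderiv_fun_sub ((hdiff θ₁) x) ((hdiff θ₂) x), fderiv_const_mul (hc x)]
    calc ‖fderiv ℝ g x‖
        = ‖gradient (ℓ θ₁) x - gradient (ℓ θ₂) x - (γ₁ - γ₂) • gradient c x‖ := by
          rw [h1, ← LinearIsometryEquiv.norm_map
            (toDual ℝ (EuclideanSpace ℝ (Fin d))).symm]
          simp only [map_sub, map_smul]
          rfl
      _ ≤ ‖gradient (ℓ θ₁) x - gradient (ℓ θ₂) x‖ + ‖(γ₁ - γ₂) • gradient c x‖ :=
          norm_sub_le _ _
      _ ≤ Lzθ * ‖θ₁ - θ₂‖ + |γ₁ - γ₂| * Lc := by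
          refine add_le_add (hcross θ₁ θ₂ x) ?_
          rw [norm_smul, Real.norm_eq_abs]
          exact mul_le_mul_of_nonneg_left (hLc x) (abs_nonneg _)
      _ = K := by rw [hK]; ring
  -- mean value bound for g
  have hgbound : ‖g ζ₁ - g ζ₂‖ ≤ K * ‖ζ₁ - ζ₂‖ :=
    (convex_univ : Convex ℝ (Set.univ : Set (EuclideanSpace ℝ (Fin d)))).norm_image_sub_le_of_norm_fderiv_le
      (fun x _ => (hgd x)) (fun x _ => hgrad x) (Set.mem_univ ζ₂) (Set.mem_univ ζ₁)
  -- strong concavity gaps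
  have h1 := strongConcave_max_gap hsc₁ hζ₁ hζ₂ hmax₁
  have h2 := strongConcave_max_gap hsc₂ hζ₂ hζ₁ hmax₂
  rw [norm_sub_rev ζ₂ ζ₁] at h2
  have hD : lam * ‖ζ₁ - ζ₂‖ ^ 2 ≤ g ζ₁ - g ζ₂ := by
    simp only [hg]
    nlinarith [h1, h2]
  have hgK : g ζ₁ - g ζ₂ ≤ K * ‖ζ₁ - ζ₂‖ :=
    (le_abs_self _).trans ((Real.norm_eq_abs _ ▸ hgbound))
  have hfinal : lam * ‖ζ₁ - ζ₂‖ ^ 2 ≤ K * ‖ζ₁ - ζ₂‖ := hD.trans hgK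
  rcases eq_or_lt_of_le (norm_nonneg (ζ₁ - ζ₂)) with h0 | h0
  · rw [← h0, div_mul_eq_mul_div, div_mul_eq_mul_div]
    exact add_nonneg (div_nonneg hK1 hlam.le) (div_nonneg hK2 hlam.le)
  · have : lam * ‖ζ₁ - ζ₂‖ ≤ K := by
      nlinarith
    rw [div_mul_eq_mul_div, div_mul_eq_mul_div, ← add_div, le_div_iff₀ hlam]
    linarith [this]
end

section
/- Let f : ℝ^n → ℝ be differentiable with L_f-Lipschitz gradient, let r : ℝ^n → ℝ be convex, and set F := f + r. Let α > 0, η > 0, θ ∈ ℝ^n, g ∈ ℝ^n, define δ := ∇f(θ) − g, and let θ⁺ minimize θ' ↦ α·r(θ') + (1/2)·‖θ' − (θ − α·g)‖² over ℝ^n. Then F(θ⁺) − F(θ) ≤ ((L_f + η)/2 − 1/α)·‖θ⁺ − θ‖² + ‖δ‖²/(2η). (Equation (42) of the paper: one-step descent inequality for the proximal gradient step with an inexact gradient.) -/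
open InnerProductSpace

local notation "⟪" x ", " y "⟫" => @inner ℝ _ _ x y

/-- Descent lemma: a function with `L`-Lipschitz gradient satisfies the quadratic
upper bound. -/
lemma descent_lemma_aux {n : ℕ} (f : EuclideanSpace ℝ (Fin n) → ℝ)
    (hf : Differentiable ℝ f) (Lf : ℝ)
    (hLip : ∀ x y, ‖gradient f x - gradient f y‖ ≤ Lf * ‖x - y‖)
    (x y : EuclideanSpace ℝ (Fin n)) :
    f y ≤ f x + ⟪gradient f x, y - x⟫ + Lf / 2 * ‖y - x‖ ^ 2 := by
  set d := y - x with hd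
  have hkey : ∀ z, (fderiv ℝ f z) d = ⟪gradient f z, d⟫ := by
    intro z
    have h1 : HasFDerivAt f (toDual ℝ _ (gradient f z)) z :=
      hasGradientAt_iff_hasFDerivAt.mp (hf z).hasGradientAt
    rw [h1.fderiv]
    simp [InnerProductSpace.toDual_apply_apply]
  set φ : ℝ → ℝ := fun t =>
    f (x + t • d) - t * ⟪gradient f x, d⟫ - t ^ 2 * (Lf * ‖d‖ ^ 2 / 2) with hφ
  have hγ : ∀ t : ℝ, HasDerivAt (fun s : ℝ => x + s • d) d t := by
    intro t
    have h := ((hasDerivAt_id t).smul_const d).const_add x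
    simpa using h
  have hφ' : ∀ t : ℝ, HasDerivAt φ
      (⟪gradient f (x + t • d), d⟫ - ⟪gradient f x, d⟫ - 2 * t * (Lf * ‖d‖ ^ 2 / 2)) t := by
    intro t
    have h1 : HasDerivAt (fun s : ℝ => f (x + s • d)) ((fderiv ℝ f (x + t • d)) d) t :=
      (hf (x + t • d)).hasFDerivAt.comp_hasDerivAt t (hγ t)
    have h2 : HasDerivAt (fun s : ℝ => s * ⟪gradient f x, d⟫) ⟪gradient f x, d⟫ t :=
      hasDerivAt_mul_const _
    have h3 : HasDerivAt (fun s : ℝ => s ^ 2 * (Lf * ‖d‖ ^ 2 / 2))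
        ((2 * t ^ 1) * (Lf * ‖d‖ ^ 2 / 2)) t := (hasDerivAt_pow 2 t).mul_const _
    have := (h1.sub h2).sub h3
    rw [hkey] at this
    simp only [pow_one] at this; exact this
  have hcont : Continuous φ :=
    continuous_iff_continuousAt.mpr fun t => (hφ' t).continuousAt
  have hanti : AntitoneOn φ (Set.Icc (0:ℝ) 1) := by
    apply antitoneOn_of_deriv_nonpos (convex_Icc 0 1) hcont.continuousOn
    · intro t _
      exact (hφ' t).differentiableAt.differentiableWithinAt
    · intro t ht
      rw [interior_Icc] at ht
      rw [(hφ' t).deriv]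
      have hip : ⟪gradient f (x + t • d), d⟫ - ⟪gradient f x, d⟫
          = ⟪gradient f (x + t • d) - gradient f x, d⟫ := (inner_sub_left _ _ _).symm
      have h1 : ⟪gradient f (x + t • d) - gradient f x, d⟫ ≤
          ‖gradient f (x + t • d) - gradient f x‖ * ‖d‖ := real_inner_le_norm _ _
      have h2 : ‖gradient f (x + t • d) - gradient f x‖ ≤ Lf * ‖(x + t • d) - x‖ :=
        hLip _ _
      have h3 : ‖(x + t • d) - x‖ = t * ‖d‖ := by
        rw [add_sub_cancel_left, norm_smul, Real.norm_eq_abs, abs_of_pos ht.1]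
      rw [h3] at h2
      have hdn : (0:ℝ) ≤ ‖d‖ := norm_nonneg _
      nlinarith [hip, h1, h2, ht.1.le]
  have h01 := hanti (Set.mem_Icc.mpr ⟨le_refl 0, zero_le_one⟩)
    (Set.mem_Icc.mpr ⟨zero_le_one, le_refl 1⟩) zero_le_one
  have h0 : φ 0 = f x := by simp [hφ]
  have h1 : φ 1 = f y - ⟪gradient f x, d⟫ - Lf * ‖d‖ ^ 2 / 2 := by
    simp [hφ, hd]
  rw [h0, h1] at h01
  linarith

/-- Equation (42) of the paper: one-step descent inequality for the proximal gradient step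
with an inexact gradient `g`. With `F = f + r`, `δ = ∇f(θ) - g` and
`θ⁺ = prox_{αr}(θ - α g)`, one has
`F(θ⁺) - F(θ) ≤ ((L_f + η)/2 - 1/α) ‖θ⁺ - θ‖² + ‖δ‖²/(2η)`. -/
theorem prox_inexact_descent
    {n : ℕ} (f : EuclideanSpace ℝ (Fin n) → ℝ) (hf : Differentiable ℝ f)
    (Lf : ℝ) (hLip : ∀ x y, ‖gradient f x - gradient f y‖ ≤ Lf * ‖x - y‖)
    (r : EuclideanSpace ℝ (Fin n) → ℝ) (hr : ConvexOn ℝ Set.univ r)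
    (α η : ℝ) (hα : 0 < α) (hη : 0 < η)
    (θ g θp : EuclideanSpace ℝ (Fin n))
    (hθp : ∀ θ', α * r θp + (1 / 2) * ‖θp - (θ - α • g)‖ ^ 2 ≤
      α * r θ' + (1 / 2) * ‖θ' - (θ - α • g)‖ ^ 2) :
    (f θp + r θp) - (f θ + r θ) ≤
      ((Lf + η) / 2 - 1 / α) * ‖θp - θ‖ ^ 2 + ‖gradient f θ - g‖ ^ 2 / (2 * η) := by
  set v : EuclideanSpace ℝ (Fin n) := θ - α • g with hv
  set d : EuclideanSpace ℝ (Fin n) := θp - θ with hd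
  -- Step 1 : prox inequality  α (r θp - r θ) ≤ ⟪θp - v, θ - θp⟫
  have hprox : α * (r θp - r θ) ≤ ⟪θp - v, θ - θp⟫ := by
    set B : ℝ := ⟪θp - v, θ - θp⟫ with hB
    set C : ℝ := ‖θ - θp‖ ^ 2 with hC
    have hC0 : 0 ≤ C := by positivity
    have key : ∀ t : ℝ, 0 < t → t ≤ 1 → α * (r θp - r θ) ≤ B + t / 2 * C := by
      intro t ht0 ht1
      have hm : θp + t • (θ - θp) = (1 - t) • θp + t • θ := by module
      have hconv : r ((1 - t) • θp + t • θ) ≤ (1 - t) * r θp + t * r θ :=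
        hr.2 (Set.mem_univ θp) (Set.mem_univ θ) (by linarith) ht0.le (by ring)
      have hmin := hθp (θp + t • (θ - θp))
      have hexp : ‖(θp + t • (θ - θp)) - v‖ ^ 2
          = ‖θp - v‖ ^ 2 + 2 * (t * B) + t ^ 2 * C := by
        have : (θp + t • (θ - θp)) - v = (θp - v) + t • (θ - θp) := by module
        rw [this, norm_add_sq_real, real_inner_smul_right, norm_smul,
          Real.norm_eq_abs, abs_of_pos ht0, mul_pow]
      rw [hexp, hm] at hmin
      have hr' : α * r ((1 - t) • θp + t • θ) ≤ α * ((1 - t) * r θp + t * r θ) := by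
        nlinarith [hconv, hα.le]
      nlinarith [hmin, hr', ht0, hC0]
    refine le_of_forall_pos_le_add ?_
    intro ε hε
    have ht0 : 0 < min 1 (2 * ε / (C + 1)) := by positivity
    have ht1 : min 1 (2 * ε / (C + 1)) ≤ 1 := min_le_left _ _
    have h := key _ ht0 ht1
    have h2 : min 1 (2 * ε / (C + 1)) / 2 * C ≤ ε := by
      have hle : min 1 (2 * ε / (C + 1)) ≤ 2 * ε / (C + 1) := min_le_right _ _
      have hC1 : (0:ℝ) < C + 1 := by linarith
      have hcan : 2 * ε / (C + 1) * (C + 1) = 2 * ε := div_mul_cancel₀ _ hC1.ne'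
      nlinarith [mul_le_mul_of_nonneg_right hle hC1.le, hcan, hC0, ht0]
    linarith
  -- expand B
  have hBeq : ⟪θp - v, θ - θp⟫ = -‖d‖ ^ 2 - α * ⟪g, d⟫ := by
    have h1 : θp - v = d + α • g := by rw [hv, hd]; module
    have h2 : θ - θp = -d := by rw [hd]; module
    rw [h1, h2, inner_neg_right, inner_add_left, real_inner_smul_left,
      real_inner_self_eq_norm_sq]
    ring
  rw [hBeq] at hprox
  have hprox2 : r θp - r θ ≤ -(1 / α) * ‖d‖ ^ 2 - ⟪g, d⟫ := by
    rw [← mul_le_mul_iff_right₀ hα]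
    have : α * (-(1 / α) * ‖d‖ ^ 2 - ⟪g, d⟫) = -‖d‖ ^ 2 - α * ⟪g, d⟫ := by
      field_simp
    rw [this]; exact hprox
  -- Step 2 : descent lemma
  have hdesc : f θp ≤ f θ + ⟪gradient f θ, d⟫ + Lf / 2 * ‖d‖ ^ 2 := by
    have := descent_lemma_aux f hf Lf hLip θ θp
    rwa [← hd] at this
  -- Step 3 : Young's inequality
  have hyoung : ⟪gradient f θ - g, d⟫ ≤
      ‖gradient f θ - g‖ ^ 2 / (2 * η) + η / 2 * ‖d‖ ^ 2 := by
    have h1 : ⟪gradient f θ - g, d⟫ ≤ ‖gradient f θ - g‖ * ‖d‖ := real_inner_le_norm _ _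
    have h2 : ‖gradient f θ - g‖ * ‖d‖ ≤
        ‖gradient f θ - g‖ ^ 2 / (2 * η) + η / 2 * ‖d‖ ^ 2 := by
      rw [div_add' _ _ _ (by positivity), le_div_iff₀ (by positivity)]
      nlinarith [sq_nonneg (‖gradient f θ - g‖ - η * ‖d‖)]
    linarith
  have hsplit : ⟪gradient f θ - g, d⟫ = ⟪gradient f θ, d⟫ - ⟪g, d⟫ :=
    inner_sub_left _ _ _
  linarith [hdesc, hprox2, hyoung, hsplit.symm.le, hsplit.le]
end

section
/- Let f : ℝ^n → ℝ be differentiable with L_f-Lipschitz gradient, let r : ℝ^n → ℝ be convex, and set F := f + r. Let α > 0 and η > 0, let g⁰, …, g^T ∈ ℝ^n be arbitrary vectors, and let θ⁰, …, θ^{T+1} ∈ ℝ^n be a sequence such that for each t = 0, …, T the point θ^{t+1} minimizes θ' ↦ α·r(θ') + (1/2)·‖θ' − (θ^t − α·g^t)‖² over ℝ^n. Then (1/α − (L_f + η)/2)·∑_{t=0}^{T} ‖θ^{t+1} − θ^t‖² ≤ F(θ⁰) − F(θ^{T+1}) + (1/(2η))·∑_{t=0}^{T} ‖∇f(θ^t)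 − g^t‖². (Equation (45) of the paper: bound on the cumulative movement of the inexact proximal gradient iterates.) -/
open RealInnerProductSpace


variable {E : Type*} [NormedAddCommGroup E] [InnerProductSpace ℝ E]

lemma descent_lemma [CompleteSpace E] (f : E → ℝ) (hf : Differentiable ℝ f) (L : ℝ)
    (hL : ∀ x y, ‖gradient f x - gradient f y‖ ≤ L * ‖x - y‖) (x y : E) :
    f y ≤ f x + ⟪gradient f x, y - x⟫ + L / 2 * ‖y - x‖ ^ 2 := by
  set c : ℝ → E := fun t => x + t • (y - x) with hc
  have hcd : ∀ t : ℝ, HasDerivAt c (y - x) t := by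
    intro t
    have h := ((hasDerivAt_id t).smul_const (y - x)).const_add x
    rw [one_smul] at h
    exact h
  have hφ : ∀ t : ℝ, HasDerivAt (fun s => f (c s)) ⟪gradient f (c t), y - x⟫ t := by
    intro t
    have h1 : HasFDerivAt f (InnerProductSpace.toDual ℝ E (gradient f (c t))) (c t) :=
      (hf (c t)).hasGradientAt.hasFDerivAt
    have := h1.comp_hasDerivAt t (hcd t)
    simp at this ⊢
    exact this
  have hgradcont : Continuous (gradient f) := by
    have : LipschitzWith (Real.toNNReal L) (gradient f) := by
      apply LipschitzWith.of_dist_le_mul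
      intro a b
      rw [dist_eq_norm, dist_eq_norm]
      refine (hL a b).trans (mul_le_mul_of_nonneg_right ?_ (norm_nonneg _))
      exact Real.le_coe_toNNReal L
    exact this.continuous
  have hccont : Continuous c := by fun_prop
  have hψcont : Continuous (fun t : ℝ => ⟪gradient f (c t), y - x⟫) :=
    (hgradcont.comp hccont).inner continuous_const
  have key : f y - f x = ∫ t in (0:ℝ)..1, ⟪gradient f (c t), y - x⟫ := by
    have := intervalIntegral.integral_eq_sub_of_hasDerivAt
      (fun t _ => hφ t) (hψcont.intervalIntegrable 0 1)
    simp only [hc] at this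
    rw [this]
    norm_num
  have hpt : ∀ t ∈ Set.Icc (0:ℝ) 1,
      ⟪gradient f (c t), y - x⟫ ≤ ⟪gradient f x, y - x⟫ + (L * ‖y - x‖ ^ 2) * t := by
    intro t ht
    have h1 : ⟪gradient f (c t) - gradient f x, y - x⟫ ≤ L * ‖y - x‖ ^ 2 * t := by
      have h2 := real_inner_le_norm (gradient f (c t) - gradient f x) (y - x)
      have h3 : ‖gradient f (c t) - gradient f x‖ ≤ L * (t * ‖y - x‖) := by
        have := hL (c t) x
        simpa [hc, norm_smul, abs_of_nonneg ht.1] using this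
      nlinarith [norm_nonneg (y - x), ht.1]
    have := inner_sub_left (𝕜 := ℝ) (gradient f (c t)) (gradient f x) (y - x)
    simp only [this] at h1 ⊢
    linarith
  have hintle : (∫ t in (0:ℝ)..1, ⟪gradient f (c t), y - x⟫) ≤
      ∫ t in (0:ℝ)..1, (⟪gradient f x, y - x⟫ + (L * ‖y - x‖ ^ 2) * t) := by
    apply intervalIntegral.integral_mono_on (by norm_num)
      (hψcont.intervalIntegrable 0 1)
      ((continuous_const.add (continuous_const.mul continuous_id)).intervalIntegrable 0 1)
    exact hpt
  have hrhs : (∫ t in (0:ℝ)..1, (⟪gradient f x, y - x⟫ + (L * ‖y - x‖ ^ 2) * t))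
      = ⟪gradient f x, y - x⟫ + L / 2 * ‖y - x‖ ^ 2 := by
    rw [intervalIntegral.integral_add (intervalIntegrable_const)
      ((intervalIntegral.intervalIntegrable_id).const_mul _),
      intervalIntegral.integral_const_mul, integral_id, intervalIntegral.integral_const]
    norm_num; ring
  linarith [key ▸ hintle.trans_eq hrhs]

lemma quad_identity (s : ℝ) (hs0 : 0 ≤ s) (hs1 : s ≤ 1) (a b : E) :
    ‖(1 - s) • a + s • b‖ ^ 2 =
      (1 - s) * ‖a‖ ^ 2 + s * ‖b‖ ^ 2 - s * (1 - s) * ‖b - a‖ ^ 2 := by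
  have h1 := norm_add_sq_real ((1 - s) • a) (s • b)
  have h2 := norm_sub_sq_real b a
  rw [real_inner_smul_left, real_inner_smul_right, norm_smul, norm_smul,
    Real.norm_eq_abs, Real.norm_eq_abs, abs_of_nonneg (by linarith : (0:ℝ) ≤ 1 - s),
    abs_of_nonneg hs0] at h1
  rw [real_inner_comm] at h2
  rw [h1, h2]; ring

lemma prox_strong (r : E → ℝ) (hr : ConvexOn ℝ Set.univ r) (a : ℝ) (ha : 0 ≤ a) (v p : E)
    (hmin : ∀ z, a * r p + (1 / 2) * ‖p - v‖ ^ 2 ≤ a * r z + (1 / 2) * ‖z - v‖ ^ 2)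
    (w : E) :
    a * r p + (1 / 2) * ‖p - v‖ ^ 2 + (1 / 2) * ‖w - p‖ ^ 2 ≤
      a * r w + (1 / 2) * ‖w - v‖ ^ 2 := by
  refine le_of_forall_pos_le_add ?_
  intro ε hε
  have hD0 : (0:ℝ) ≤ ‖w - p‖ ^ 2 := by positivity
  obtain ⟨s, hs0, hs1, hsD⟩ : ∃ s : ℝ, 0 < s ∧ s ≤ 1 ∧ s * ‖w - p‖ ^ 2 ≤ ε := by
    refine ⟨min 1 (ε / (‖w - p‖ ^ 2 + 1)), lt_min one_pos (by positivity), min_le_left _ _, ?_⟩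
    have h1 : min 1 (ε / (‖w - p‖ ^ 2 + 1)) ≤ ε / (‖w - p‖ ^ 2 + 1) := min_le_right _ _
    have h3 : (ε / (‖w - p‖ ^ 2 + 1)) * ‖w - p‖ ^ 2 ≤ ε := by
      rw [div_mul_eq_mul_div, div_le_iff₀ (by linarith)]
      nlinarith
    nlinarith
  have hconv := hr.2 (Set.mem_univ p) (Set.mem_univ w) (by linarith : (0:ℝ) ≤ 1 - s)
    hs0.le (by ring)
  have hquad := quad_identity s hs0.le hs1 (p - v) (w - v)
  have hvec : (1 - s) • (p - v) + s • (w - v) = ((1 - s) • p + s • w) - v := by module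
  have hvec2 : (w - v) - (p - v) = w - p := by abel
  rw [hvec, hvec2] at hquad
  have hm := hmin ((1 - s) • p + s • w)
  simp only [smul_eq_mul] at hconv
  have h4 : a * r ((1 - s) • p + s • w) ≤ a * ((1 - s) * r p + s * r w) :=
    mul_le_mul_of_nonneg_left hconv ha
  have key : s * (a * r p + (1 / 2) * ‖p - v‖ ^ 2 + (1 / 2) * (1 - s) * ‖w - p‖ ^ 2) ≤
      s * (a * r w + (1 / 2) * ‖w - v‖ ^ 2) := by nlinarith [hm, h4, hquad]
  have key2 := (mul_le_mul_iff_right₀ hs0).mp key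
  nlinarith [key2, hsD, mul_nonneg hs0.le hD0]

lemma young_ineq (η : ℝ) (hη : 0 < η) (e d : E) :
    ⟪e, d⟫ ≤ 1 / (2 * η) * ‖e‖ ^ 2 + η / 2 * ‖d‖ ^ 2 := by
  have hpoly : 2 * η * ⟪e, d⟫ ≤ ‖e‖ ^ 2 + η ^ 2 * ‖d‖ ^ 2 := by
    have h := real_inner_le_norm e d
    nlinarith [sq_nonneg (‖e‖ - η * ‖d‖), norm_nonneg e, norm_nonneg d]
  have h := mul_le_mul_of_nonneg_left hpoly (le_of_lt (by positivity : (0:ℝ) < 1 / (2 * η)))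
  have e1 : 1 / (2 * η) * (2 * η * ⟪e, d⟫) = ⟪e, d⟫ := by field_simp
  have e2 : 1 / (2 * η) * (‖e‖ ^ 2 + η ^ 2 * ‖d‖ ^ 2)
      = 1 / (2 * η) * ‖e‖ ^ 2 + η / 2 * ‖d‖ ^ 2 := by field_simp
  linarith

lemma per_step [CompleteSpace E] (f : E → ℝ) (hf : Differentiable ℝ f) (Lf : ℝ)
    (hLip : ∀ x y, ‖gradient f x - gradient f y‖ ≤ Lf * ‖x - y‖)
    (r : E → ℝ) (hr : ConvexOn ℝ Set.univ r)
    (α η : ℝ) (hα : 0 < α) (hη : 0 < η) (w g p : E)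
    (hmin : ∀ z, α * r p + (1 / 2) * ‖p - (w - α • g)‖ ^ 2 ≤
      α * r z + (1 / 2) * ‖z - (w - α • g)‖ ^ 2) :
    (1 / α - (Lf + η) / 2) * ‖p - w‖ ^ 2 ≤
      (f w + r w) - (f p + r p) + 1 / (2 * η) * ‖gradient f w - g‖ ^ 2 := by
  set Δ : E := p - w with hΔ
  have hps := prox_strong r hr α hα.le (w - α • g) p hmin w
  have hv1 : p - (w - α • g) = Δ + α • g := by rw [hΔ]; abel
  have hv2 : w - (w - α • g) = α • g := by abel
  have hv3 : ‖w - p‖ = ‖Δ‖ := by rw [hΔ, norm_sub_rev]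
  rw [hv1, hv2, hv3] at hps
  have hexp : ‖Δ + α • g‖ ^ 2 = ‖Δ‖ ^ 2 + 2 * (α * ⟪Δ, g⟫) + ‖α • g‖ ^ 2 := by
    rw [norm_add_sq_real, real_inner_smul_right]
  rw [hexp] at hps
  -- hps : α r p + ½(‖Δ‖² + 2α⟪Δ,g⟫ + ‖αg‖²) + ½‖Δ‖² ≤ α r w + ½‖αg‖²
  have h5 : ‖Δ‖ ^ 2 ≤ α * (r w - r p - ⟪Δ, g⟫) := by nlinarith [hps]
  have h6 : 1 / α * ‖Δ‖ ^ 2 ≤ r w - r p - ⟪Δ, g⟫ := by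
    have h := mul_le_mul_of_nonneg_left h5 (le_of_lt (by positivity : (0:ℝ) < 1 / α))
    rw [← mul_assoc, one_div, inv_mul_cancel₀ hα.ne', one_mul] at h
    rw [one_div]; exact h
  have hdes := descent_lemma f hf Lf hLip w p
  rw [← hΔ] at hdes
  have hyoung := young_ineq η hη (gradient f w - g) Δ
  rw [inner_sub_left] at hyoung
  rw [real_inner_comm g Δ] at h6
  linarith


/-- Equation (45) of the paper: bound on the cumulative movement of the inexact proximal
gradient iterates `θ^{t+1} = prox_{αr}(θ^t - α g^t)` for `F = f + r`:
`(1/α - (L_f + η)/2) ∑_{t=0}^{T} ‖θ^{t+1} - θ^t‖² ≤ F(θ⁰) - F(θ^{T+1})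
  + (1/(2η)) ∑_{t=0}^{T} ‖∇f(θ^t) - g^t‖²`. -/
theorem prox_inexact_cumulative_movement
    {n : ℕ} (f : EuclideanSpace ℝ (Fin n) → ℝ) (hf : Differentiable ℝ f)
    (Lf : ℝ) (hLip : ∀ x y, ‖gradient f x - gradient f y‖ ≤ Lf * ‖x - y‖)
    (r : EuclideanSpace ℝ (Fin n) → ℝ) (hr : ConvexOn ℝ Set.univ r)
    (α η : ℝ) (hα : 0 < α) (hη : 0 < η)
    (T : ℕ) (g θ : ℕ → EuclideanSpace ℝ (Fin n))
    (hstep : ∀ t ≤ T, ∀ θ',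
      α * r (θ (t + 1)) + (1 / 2) * ‖θ (t + 1) - (θ t - α • g t)‖ ^ 2 ≤
        α * r θ' + (1 / 2) * ‖θ' - (θ t - α • g t)‖ ^ 2) :
    (1 / α - (Lf + η) / 2) * ∑ t ∈ Finset.range (T + 1), ‖θ (t + 1) - θ t‖ ^ 2 ≤
      (f (θ 0) + r (θ 0)) - (f (θ (T + 1)) + r (θ (T + 1))) +
        (1 / (2 * η)) * ∑ t ∈ Finset.range (T + 1), ‖gradient f (θ t) - g t‖ ^ 2 := by
  have hstep' : ∀ t ∈ Finset.range (T + 1),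
      (1 / α - (Lf + η) / 2) * ‖θ (t + 1) - θ t‖ ^ 2 ≤
        ((f (θ t) + r (θ t)) - (f (θ (t + 1)) + r (θ (t + 1)))
          + 1 / (2 * η) * ‖gradient f (θ t) - g t‖ ^ 2) := by
    intro t ht
    exact per_step f hf Lf hLip r hr α η hα hη (θ t) (g t) (θ (t + 1))
      (hstep t (Nat.lt_succ_iff.mp (Finset.mem_range.mp ht)))
  calc (1 / α - (Lf + η) / 2) * ∑ t ∈ Finset.range (T + 1), ‖θ (t + 1) - θ t‖ ^ 2
      = ∑ t ∈ Finset.range (T + 1), (1 / α - (Lf + η) / 2) * ‖θ (t + 1) - θ t‖ ^ 2 :=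
        Finset.mul_sum _ _ _
    _ ≤ ∑ t ∈ Finset.range (T + 1),
        ((f (θ t) + r (θ t)) - (f (θ (t + 1)) + r (θ (t + 1)))
          + 1 / (2 * η) * ‖gradient f (θ t) - g t‖ ^ 2) := Finset.sum_le_sum hstep'
    _ = (f (θ 0) + r (θ 0)) - (f (θ (T + 1)) + r (θ (T + 1))) +
        (1 / (2 * η)) * ∑ t ∈ Finset.range (T + 1), ‖gradient f (θ t) - g t‖ ^ 2 := by
        rw [Finset.sum_add_distrib, Finset.sum_range_sub' (fun t => f (θ t) + r (θ t)),
          ← Finset.mul_sum]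
end

section
/- Let f : ℝ^n → ℝ be differentiable with L_f-Lipschitz gradient, let r : ℝ^n → ℝ be convex, and set F := f + r. Let α > 0, θ ∈ ℝ^n, g ∈ ℝ^n, and let θ⁺ minimize θ' ↦ α·r(θ') + (1/2)·‖θ' − (θ − α·g)‖² over ℝ^n. Then ‖g − ∇f(θ⁺) + (1/α)·(θ⁺ − θ)‖² ≤ 2·‖g − ∇f(θ)‖² + (2/α)·(F(θ) − F(θ⁺)) + (2·L_f² + 3·L_f/α)·‖θ⁺ − θ‖². (Per-step bound on the stationarity measure of the proximal gradient iterate, from the proof of Theorem 1.) -/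
open InnerProductSpace

lemma aux_grad_inner {n : ℕ} (f : EuclideanSpace ℝ (Fin n) → ℝ) (p v : EuclideanSpace ℝ (Fin n)) :
    ⟪gradient f p, v⟫_ℝ = fderiv ℝ f p v := by
  rw [gradient]
  rw [← InnerProductSpace.toDual_apply_apply, (toDual ℝ _).apply_symm_apply]

lemma aux_descent {n : ℕ} (f : EuclideanSpace ℝ (Fin n) → ℝ) (hf : Differentiable ℝ f)
    (Lf : ℝ) (hLip : ∀ x y, ‖gradient f x - gradient f y‖ ≤ Lf * ‖x - y‖)
    (x y : EuclideanSpace ℝ (Fin n)) :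
    f y ≤ f x + ⟪gradient f x, y - x⟫_ℝ + Lf / 2 * ‖y - x‖ ^ 2 := by
  set d := y - x with hd
  set φ : ℝ → ℝ := fun t => f (x + t • d) - t * ⟪gradient f x, d⟫_ℝ - Lf / 2 * t ^ 2 * ‖d‖ ^ 2
    with hφ
  have hder : ∀ t : ℝ, HasDerivAt φ
      (⟪gradient f (x + t • d), d⟫_ℝ - ⟪gradient f x, d⟫_ℝ - Lf * t * ‖d‖ ^ 2) t := by
    intro t
    have hline : HasDerivAt (fun t : ℝ => x + t • d) d t := by
      simpa using (HasDerivAt.const_add x ((hasDerivAt_id t).smul_const d))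
    have h1 : HasDerivAt (fun t : ℝ => f (x + t • d)) (fderiv ℝ f (x + t • d) d) t :=
      (hf (x + t • d)).hasFDerivAt.comp_hasDerivAt t hline
    have h2 : HasDerivAt (fun t : ℝ => t * ⟪gradient f x, d⟫_ℝ) (⟪gradient f x, d⟫_ℝ) t := by
      simpa using (hasDerivAt_id t).mul_const (⟪gradient f x, d⟫_ℝ)
    have h3 : HasDerivAt (fun t : ℝ => Lf / 2 * t ^ 2 * ‖d‖ ^ 2) (Lf * t * ‖d‖ ^ 2) t := by
      have := ((hasDerivAt_pow 2 t).const_mul (Lf / 2)).mul_const (‖d‖ ^ 2)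
      exact this.congr_deriv (by ring)
    have := (h1.sub h2).sub h3
    rw [← aux_grad_inner] at this
    exact this
  have hmono : AntitoneOn φ (Set.Icc 0 1) := by
    apply antitoneOn_of_deriv_nonpos (convex_Icc 0 1)
    · exact fun t _ => ((hder t).continuousAt.continuousWithinAt)
    · intro t ht
      exact (hder t).differentiableAt.differentiableWithinAt
    · intro t ht
      rw [interior_Icc] at ht
      rw [(hder t).deriv]
      have hip : ⟪gradient f (x + t • d) - gradient f x, d⟫_ℝ ≤ Lf * t * ‖d‖ ^ 2 := by
        calc ⟪gradient f (x + t • d) - gradient f x, d⟫_ℝ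
            ≤ ‖gradient f (x + t • d) - gradient f x‖ * ‖d‖ := real_inner_le_norm _ _
          _ ≤ (Lf * ‖(x + t • d) - x‖) * ‖d‖ := by
              apply mul_le_mul_of_nonneg_right (hLip _ _) (norm_nonneg _)
          _ = Lf * t * ‖d‖ ^ 2 := by
              rw [add_sub_cancel_left, norm_smul]
              simp [abs_of_pos ht.1]
              ring
      rw [inner_sub_left] at hip
      linarith
  have key := hmono (Set.left_mem_Icc.2 zero_le_one) (Set.right_mem_Icc.2 zero_le_one) zero_le_one
  simp only [hφ] at key
  simp only [one_smul, zero_smul, one_pow, mul_one, one_mul, zero_mul, ne_eq, OfNat.ofNat_ne_zero,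
    not_false_eq_true, zero_pow, mul_zero, zero_mul, sub_zero, add_zero] at key
  have h01 : x + d = y := by rw [hd]; abel
  rw [h01] at key
  linarith

/-- Per-step bound on the stationarity measure of the proximal gradient iterate, from the
proof of Theorem 1: with `F = f + r` and `θ⁺ = prox_{αr}(θ - α g)`,
`‖g - ∇f(θ⁺) + (1/α)(θ⁺ - θ)‖² ≤ 2‖g - ∇f(θ)‖² + (2/α)(F(θ) - F(θ⁺))
  + (2 L_f² + 3 L_f/α) ‖θ⁺ - θ‖²`. -/
theorem prox_step_stationarity_bound
    {n : ℕ} (f : EuclideanSpace ℝ (Fin n) → ℝ) (hf : Differentiable ℝ f)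
    (Lf : ℝ) (hLip : ∀ x y, ‖gradient f x - gradient f y‖ ≤ Lf * ‖x - y‖)
    (r : EuclideanSpace ℝ (Fin n) → ℝ) (hr : ConvexOn ℝ Set.univ r)
    (α : ℝ) (hα : 0 < α) (θ g θp : EuclideanSpace ℝ (Fin n))
    (hθp : ∀ θ', α * r θp + (1 / 2) * ‖θp - (θ - α • g)‖ ^ 2 ≤
      α * r θ' + (1 / 2) * ‖θ' - (θ - α • g)‖ ^ 2) :
    ‖g - gradient f θp + (1 / α) • (θp - θ)‖ ^ 2 ≤
      2 * ‖g - gradient f θ‖ ^ 2 + (2 / α) * ((f θ + r θ) - (f θp + r θp)) +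
        (2 * Lf ^ 2 + 3 * Lf / α) * ‖θp - θ‖ ^ 2 := by
  set d := θp - θ with hdd
  rcases eq_or_ne θp θ with hcase | hcase
  · subst hcase
    simp only [sub_self, smul_zero, add_zero, norm_zero] at *
    have h0 : (0:ℝ) ≤ ‖g - gradient f θp‖ ^ 2 := by positivity
    simp only [hdd, sub_self, smul_zero, add_zero, norm_zero]
    norm_num
    linarith
  · -- Lf ≥ 0
    have hD : 0 < ‖d‖ := by
      rw [hdd, norm_pos_iff]
      exact sub_ne_zero_of_ne hcase
    have hLf : 0 ≤ Lf := by
      have h1 := hLip θp θ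
      have h2 : (0:ℝ) ≤ ‖gradient f θp - gradient f θ‖ := norm_nonneg _
      nlinarith
    have hβ : 0 < 1 / α := by positivity
    -- prox inequality
    have hprox : ⟪g, d⟫_ℝ ≤ r θ - r θp - 1 / (2 * α) * ‖d‖ ^ 2 := by
      have h := hθp θ
      have e1 : θp - (θ - α • g) = d + α • g := by rw [hdd]; abel
      have e2 : θ - (θ - α • g) = α • g := by abel
      rw [e1, e2, norm_add_sq_real] at h
      rw [real_inner_smul_right] at h
      have hkey : α * (r θp - r θ) + (1/2) * ‖d‖ ^ 2 + α * ⟪d, g⟫_ℝ ≤ 0 := by linarith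
      have hcomm : ⟪d, g⟫_ℝ = ⟪g, d⟫_ℝ := real_inner_comm _ _
      rw [hcomm] at hkey
      have hα' : α ≠ 0 := ne_of_gt hα
      rw [← mul_le_mul_iff_right₀ hα]
      have e : α * (r θ - r θp - 1 / (2 * α) * ‖d‖ ^ 2)
          = α * (r θ) - α * (r θp) - (1/2) * ‖d‖ ^ 2 := by
        field_simp
      rw [e]
      nlinarith [hkey]
    -- descent lemma
    have hdesc : f θp ≤ f θ + ⟪gradient f θ, d⟫_ℝ + Lf / 2 * ‖d‖ ^ 2 := by
      have := aux_descent f hf Lf hLip θ θp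
      rwa [← hdd] at this
    -- decomposition
    set a := g - gradient f θ with ha
    set b := (gradient f θ - gradient f θp) + (1 / α) • d with hb
    have hG : g - gradient f θp + (1 / α) • d = a + b := by
      rw [ha, hb]; abel
    rw [hG, norm_add_sq_real]
    have hbnorm : ‖b‖ ≤ Lf * ‖d‖ + (1 / α) * ‖d‖ := by
      rw [hb]
      refine le_trans (norm_add_le _ _) ?_
      have h1 : ‖gradient f θ - gradient f θp‖ ≤ Lf * ‖d‖ := by
        have := hLip θ θp
        rwa [show θ - θp = -d by rw [hdd]; abel, norm_neg] at this
      have h2 : ‖(1 / α) • d‖ = (1 / α) * ‖d‖ := by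
        rw [norm_smul, Real.norm_eq_abs, abs_of_pos hβ]
      linarith
    have hbsq : ‖b‖ ^ 2 ≤ (Lf * ‖d‖ + (1 / α) * ‖d‖) ^ 2 := by
      apply pow_le_pow_left₀ (norm_nonneg _) hbnorm
    have hipb : ⟪a, b⟫_ℝ = ⟪a, gradient f θ - gradient f θp⟫_ℝ
        + (1 / α) * (⟪g, d⟫_ℝ - ⟪gradient f θ, d⟫_ℝ) := by
      rw [hb, inner_add_right, real_inner_smul_right, ha]
      simp only [inner_sub_left]
    have hip1 : ⟪a, gradient f θ - gradient f θp⟫_ℝ ≤ ‖a‖ * (Lf * ‖d‖) := by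
      refine le_trans (real_inner_le_norm _ _) ?_
      apply mul_le_mul_of_nonneg_left _ (norm_nonneg _)
      have := hLip θ θp
      rwa [show θ - θp = -d by rw [hdd]; abel, norm_neg] at this
    have hip : ⟪a, b⟫_ℝ ≤ ‖a‖ * (Lf * ‖d‖)
        + (1 / α) * ((r θ - r θp - 1 / (2 * α) * ‖d‖ ^ 2) + (f θ - f θp + Lf / 2 * ‖d‖ ^ 2)) := by
      rw [hipb]
      have h2 : ⟪g, d⟫_ℝ - ⟪gradient f θ, d⟫_ℝ ≤
          (r θ - r θp - 1 / (2 * α) * ‖d‖ ^ 2) + (f θ - f θp + Lf / 2 * ‖d‖ ^ 2) := by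
        linarith
      have := mul_le_mul_of_nonneg_left h2 (le_of_lt hβ)
      linarith
    -- final polynomial arithmetic
    have e2 : 2 / α = 2 * (1 / α) := by ring
    have e3 : 3 * Lf / α = 3 * Lf * (1 / α) := by ring
    have e4 : 1 / (2 * α) = (1 / α) / 2 := by ring
    rw [e2, e3]
    rw [e4] at hip
    set β := 1 / α
    set A := ‖a‖
    set D := ‖d‖
    nlinarith [sq_nonneg (A - Lf * D), sq_nonneg D, mul_pos hβ hβ, norm_nonneg a]
end

section
/- Let f : ℝ^n → ℝ be differentiable with L_f-Lipschitz gradient, let r : ℝ^n → ℝ be convex, and set F := f + r. Let α > 0 and η > 0 satisfy α·(L_f + η) < 2, and set β := (2·L_f² + 3·L_f/α)·(2α/(2 − α·(L_f + η))). Let g⁰, …, g^T ∈ ℝ^n be arbitrary vectors and let θ⁰, …, θ^{T+1} ∈ ℝ^n be a sequence such that for each t = 0, …, T the point θ^{t+1} minimizes θ' ↦ α·r(θ') + (1/2)·‖θ' − (θ^t − α·g^t)‖² over ℝ^n. Then ∑_{t=0}^{T} ‖g^t − ∇f(θ^{t+1}) + (1/α)·(θ^{t+1} − θ^t)‖² ≤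 (2/α + β)·(F(θ⁰) − F(θ^{T+1})) + (2 + β/(2η))·∑_{t=0}^{T} ‖∇f(θ^t) − g^t‖². (Deterministic core of Theorem 1: the cumulative squared stationarity measure of the inexact stochastic proximal gradient iterates is controlled by the initial suboptimality and the cumulative squared gradient errors.) -/
open scoped RealInnerProductSpace


set_option maxHeartbeats 1000000 in
lemma arith_core (L α η E D ΔF G2 Ieu Ied Iud U : ℝ)
    (hα : 0 < α) (hη : 0 < η) (hss : α*(L+η) < 2) (hL : 0 ≤ L)
    (hE : 0 ≤ E) (hD : 0 ≤ D) (hU : 0 ≤ U)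
    (hG2 : G2 = (U^2 - 2*Ieu + E^2) + 2*((1/α)*(Iud - Ied)) + (1/α)^2*D^2)
    (hi : -ΔF + (1/α - L/2)*D^2 ≤ Ied)
    (hU' : U ≤ L*D)
    (hIeu : -(U*E) ≤ Ieu) (hIud : Iud ≤ U*D) (hIed' : Ied ≤ E*D) :
    G2 ≤ (2/α + (2*L^2 + 3*L/α)*(2*α/(2 - α*(L+η))))*ΔF +
      (2 + (2*L^2 + 3*L/α)*(2*α/(2 - α*(L+η)))/(2*η))*E^2 := by
  have hden : 0 < 2 - α*(L+η) := by linarith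
  have hB0 : 0 ≤ 2*L^2 + 3*L/α := add_nonneg (by positivity) (div_nonneg (by linarith) hα.le)
  have hyoung : Ied ≤ E^2/(2*η) + η/2*D^2 := by
    have h1 : Ied * (2*η) ≤ E^2 + η^2*D^2 := by
      nlinarith [sq_nonneg (E - η*D), mul_le_mul_of_nonneg_right hIed' (by linarith : (0:ℝ) ≤ 2*η)]
    have h2 : Ied ≤ (E^2 + η^2*D^2)/(2*η) := (le_div_iff₀ (by linarith)).mpr h1
    calc Ied ≤ (E^2 + η^2*D^2)/(2*η) := h2
      _ = E^2/(2*η) + η/2*D^2 := by field_simp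
  have hkey : ((2 - α*(L+η))/(2*α))*D^2 ≤ ΔF + E^2/(2*η) := by
    have hcγ : (2 - α*(L+η))/(2*α) = 1/α - L/2 - η/2 := by field_simp; ring
    rw [hcγ]; linarith
  have hD2 : D^2 ≤ (2*α/(2 - α*(L+η)))*(ΔF + E^2/(2*η)) := by
    have h3 : D^2 ≤ (ΔF + E^2/(2*η)) / ((2 - α*(L+η))/(2*α)) := by
      rw [le_div_iff₀ (div_pos hden (by linarith))]
      linarith
    calc D^2 ≤ (ΔF + E^2/(2*η)) / ((2 - α*(L+η))/(2*α)) := h3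
      _ = (2*α/(2 - α*(L+η)))*(ΔF + E^2/(2*η)) := by
        rw [div_div_eq_mul_div]; ring
  have hs0 : (0:ℝ) < 1/α := by positivity
  have hstep1 : G2 ≤ 2*E^2 + (2*L^2 + 3*L*(1/α))*D^2 + 2*(1/α)*ΔF := by
    have hU2 : U^2 ≤ L^2*D^2 := by nlinarith
    have hIeu' : -2*Ieu ≤ E^2 + U^2 := by nlinarith [sq_nonneg (E - U)]
    have hIud' : Iud ≤ L*D^2 := by nlinarith [mul_le_mul_of_nonneg_right hU' hD]
    have hIud2 : (1/α)*Iud ≤ (1/α)*(L*D^2) := mul_le_mul_of_nonneg_left hIud' hs0.le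
    have h5 : -Ied ≤ ΔF - (1/α - L/2)*D^2 := by linarith
    have hiα : (1/α)*(-Ied) ≤ (1/α)*ΔF - (1/α)^2*D^2 + (1/α)*(L/2)*D^2 := by
      calc (1/α)*(-Ied) ≤ (1/α)*(ΔF - (1/α - L/2)*D^2) := mul_le_mul_of_nonneg_left h5 hs0.le
        _ = (1/α)*ΔF - (1/α)^2*D^2 + (1/α)*(L/2)*D^2 := by ring
    rw [hG2]
    have hnn : 0 ≤ (1/α)^2 * D^2 := by positivity
    linarith [hU2, hIeu', hIud2, hiα, hnn]
  have hB0' : 0 ≤ 2*L^2 + 3*L*(1/α) := add_nonneg (by positivity) (by positivity)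
  have hfinal : (2*L^2+3*L*(1/α))*D^2 ≤ (2*L^2+3*L*(1/α))*((2*α/(2-α*(L+η)))*(ΔF + E^2/(2*η))) :=
    mul_le_mul_of_nonneg_left hD2 hB0'
  calc G2 ≤ 2*E^2 + (2*L^2 + 3*L*(1/α))*D^2 + 2*(1/α)*ΔF := hstep1
    _ ≤ 2*E^2 + (2*L^2+3*L*(1/α))*((2*α/(2-α*(L+η)))*(ΔF + E^2/(2*η))) + 2*(1/α)*ΔF := by linarith
    _ = (2/α + (2*L^2 + 3*L/α)*(2*α/(2 - α*(L+η))))*ΔF +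
      (2 + (2*L^2 + 3*L/α)*(2*α/(2 - α*(L+η)))/(2*η))*E^2 := by
        field_simp
        ring


lemma descent_aux {n : ℕ} (f : EuclideanSpace ℝ (Fin n) → ℝ) (hf : Differentiable ℝ f)
    (L : ℝ) (hLip : ∀ x y, ‖gradient f x - gradient f y‖ ≤ L * ‖x - y‖)
    (x y : EuclideanSpace ℝ (Fin n)) :
    f y ≤ f x + ⟪gradient f x, y - x⟫ + L / 2 * ‖y - x‖ ^ 2 := by
  set d := y - x with hd
  have hgc : Continuous (gradient f) := by
    have hlw : LipschitzWith (Real.toNNReal (max L 0)) (gradient f) := by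
      apply LipschitzWith.of_dist_le_mul
      intro a b
      rw [dist_eq_norm, dist_eq_norm]
      calc ‖gradient f a - gradient f b‖ ≤ L * ‖a - b‖ := hLip a b
        _ ≤ (Real.toNNReal (max L 0) : ℝ) * ‖a - b‖ := by
            apply mul_le_mul_of_nonneg_right _ (norm_nonneg _)
            rw [Real.coe_toNNReal _ (le_max_right _ _)]
            exact le_max_left _ _
    exact hlw.continuous
  have hline : ∀ t : ℝ, HasDerivAt (fun t : ℝ => f (x + t • d)) ⟪gradient f (x + t • d), d⟫ t := by
    intro t
    have h1 : HasDerivAt (fun t : ℝ => x + t • d) d t := by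
      simpa using ((hasDerivAt_id t).smul_const d).const_add x
    have h2 : HasFDerivAt f ((InnerProductSpace.toDual ℝ _) (gradient f (x + t • d))) (x + t • d) :=
      (hf _).hasGradientAt.hasFDerivAt
    have h3 := h2.comp_hasDerivAt t h1
    simpa [InnerProductSpace.toDual_apply_apply, Function.comp_def] using h3
  have hcont : Continuous fun t : ℝ => ⟪gradient f (x + t • d), d⟫ := by
    exact Continuous.inner (hgc.comp (continuous_const.add (continuous_id.smul continuous_const))) continuous_const
  have hftc : ∫ t in (0:ℝ)..1, ⟪gradient f (x + t • d), d⟫ = f (x + (1:ℝ) • d) - f (x + (0:ℝ) • d) :=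
    intervalIntegral.integral_eq_sub_of_hasDerivAt (fun t _ => hline t) (hcont.intervalIntegrable 0 1)
  have hxy : x + (1:ℝ) • d = y := by rw [one_smul, hd]; abel
  have hx0 : x + (0:ℝ) • d = x := by rw [zero_smul, add_zero]
  have hmono : ∫ t in (0:ℝ)..1, ⟪gradient f (x + t • d), d⟫ ≤
      ∫ t in (0:ℝ)..1, (⟪gradient f x, d⟫ + L * ‖d‖ ^ 2 * t) := by
    apply intervalIntegral.integral_mono_on (by norm_num) (hcont.intervalIntegrable 0 1)
      ((continuous_const.add (continuous_const.mul continuous_id')).intervalIntegrable 0 1)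
    intro t ht
    have h3 : ⟪gradient f (x + t • d) - gradient f x, d⟫ ≤
        ‖gradient f (x + t • d) - gradient f x‖ * ‖d‖ := real_inner_le_norm _ _
    have h4 : ‖gradient f (x + t • d) - gradient f x‖ ≤ L * (t * ‖d‖) := by
      have h5 := hLip (x + t • d) x
      have h6 : x + t • d - x = t • d := by abel
      rw [h6, norm_smul, Real.norm_eq_abs, abs_of_nonneg ht.1] at h5
      exact h5
    have h7 : ⟪gradient f (x + t • d), d⟫ =
        ⟪gradient f x, d⟫ + ⟪gradient f (x + t • d) - gradient f x, d⟫ := by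
      rw [inner_sub_left]; ring
    have h8 : ‖gradient f (x + t • d) - gradient f x‖ * ‖d‖ ≤ L * (t * ‖d‖) * ‖d‖ :=
      mul_le_mul_of_nonneg_right h4 (norm_nonneg d)
    rw [h7]
    simp only [Pi.add_apply, Pi.mul_apply]
    nlinarith [h3, h8]
  have hint2 : ∫ t in (0:ℝ)..1, (⟪gradient f x, d⟫ + L * ‖d‖ ^ 2 * t) =
      ⟪gradient f x, d⟫ + L * ‖d‖ ^ 2 * (1 / 2) := by
    rw [intervalIntegral.integral_add (f := fun _ => ⟪gradient f x, d⟫) (g := fun t => L * ‖d‖ ^ 2 * t) (intervalIntegrable_const)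
      ((continuous_const.mul continuous_id').intervalIntegrable 0 1)]
    rw [intervalIntegral.integral_const_mul, integral_id]
    simp
  rw [hxy, hx0] at hftc
  rw [hint2] at hmono
  rw [hftc] at hmono
  linarith


lemma prox_strong_s11 {n : ℕ} (r : EuclideanSpace ℝ (Fin n) → ℝ) (hr : ConvexOn ℝ Set.univ r)
    (α : ℝ) (hα : 0 ≤ α) (v m c : EuclideanSpace ℝ (Fin n))
    (hmin : ∀ θ', α * r m + (1 / 2) * ‖m - v‖ ^ 2 ≤ α * r θ' + (1 / 2) * ‖θ' - v‖ ^ 2) :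
    α * r m + (1 / 2) * ‖m - v‖ ^ 2 + (1 / 2) * ‖c - m‖ ^ 2 ≤
      α * r c + (1 / 2) * ‖c - v‖ ^ 2 := by
  have key : ∀ τ : ℝ, 0 < τ → τ ≤ 1 →
      α * r m + (1 / 2) * ‖m - v‖ ^ 2 ≤
        α * r c + (1 / 2) * ‖c - v‖ ^ 2 - ((1 - τ) / 2) * ‖c - m‖ ^ 2 := by
    intro τ hτ0 hτ1
    have hw := hmin (m + τ • (c - m))
    have hconv : r (m + τ • (c - m)) ≤ (1 - τ) * r m + τ * r c := by
      have h := hr.2 (Set.mem_univ m) (Set.mem_univ c)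
        (by linarith : (0:ℝ) ≤ 1 - τ) hτ0.le (by ring : (1 - τ) + τ = 1)
      have he : m + τ • (c - m) = (1 - τ) • m + τ • c := by
        rw [smul_sub, sub_smul, one_smul]; abel
      rw [he]
      simpa using h
    have h3 : ‖c - v‖ ^ 2 = ‖m - v‖ ^ 2 + 2 * ⟪m - v, c - m⟫ + ‖c - m‖ ^ 2 := by
      have he2 : c - v = (m - v) + (c - m) := by abel
      rw [he2, norm_add_sq_real]
    have hnorm : ‖(m + τ • (c - m)) - v‖ ^ 2 =
        (1 - τ) * ‖m - v‖ ^ 2 + τ * ‖c - v‖ ^ 2 - τ * (1 - τ) * ‖c - m‖ ^ 2 := by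
      have h1 : (m + τ • (c - m)) - v = (m - v) + τ • (c - m) := by abel
      rw [h1, norm_add_sq_real, real_inner_smul_right, norm_smul, Real.norm_eq_abs,
        abs_of_pos hτ0]
      linear_combination (-τ) * h3
    rw [hnorm] at hw
    have h4 : α * r (m + τ • (c - m)) ≤ α * ((1 - τ) * r m + τ * r c) :=
      mul_le_mul_of_nonneg_left hconv hα
    have h5 : τ * (α * r m + (1 / 2) * ‖m - v‖ ^ 2 -
        (α * r c + (1 / 2) * ‖c - v‖ ^ 2 - ((1 - τ) / 2) * ‖c - m‖ ^ 2)) ≤ 0 := by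
      nlinarith [hw, h4]
    nlinarith [h5, hτ0]
  have hS : (0:ℝ) ≤ ‖c - m‖ ^ 2 := by positivity
  have hmain : ∀ ε : ℝ, 0 < ε →
      α * r m + (1 / 2) * ‖m - v‖ ^ 2 + (1 / 2) * ‖c - m‖ ^ 2 ≤
        α * r c + (1 / 2) * ‖c - v‖ ^ 2 + ε := by
    intro ε hε
    set S := ‖c - m‖ ^ 2 with hSdef
    set τ := min 1 (ε / (S + 1)) with hτdef
    have hτ0 : 0 < τ := lt_min one_pos (div_pos hε (by linarith))
    have hτ1 : τ ≤ 1 := min_le_left _ _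
    have h6 : τ * S ≤ ε := by
      calc τ * S ≤ (ε / (S + 1)) * S := mul_le_mul_of_nonneg_right (min_le_right _ _) hS
        _ ≤ ε := by
          rw [div_mul_eq_mul_div, div_le_iff₀ (by linarith : (0:ℝ) < S + 1)]
          nlinarith
    linarith [key τ hτ0 hτ1]
  exact le_of_forall_pos_le_add hmain


lemma step_bound {n : ℕ} (f : EuclideanSpace ℝ (Fin n) → ℝ) (hf : Differentiable ℝ f)
    (Lf : ℝ) (hL : 0 ≤ Lf) (hLip : ∀ x y, ‖gradient f x - gradient f y‖ ≤ Lf * ‖x - y‖)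
    (r : EuclideanSpace ℝ (Fin n) → ℝ) (hr : ConvexOn ℝ Set.univ r)
    (α η : ℝ) (hα : 0 < α) (hη : 0 < η) (hss : α * (Lf + η) < 2)
    (gt p q : EuclideanSpace ℝ (Fin n))
    (hmin : ∀ θ', α * r q + (1 / 2) * ‖q - (p - α • gt)‖ ^ 2 ≤
      α * r θ' + (1 / 2) * ‖θ' - (p - α • gt)‖ ^ 2) :
    ‖gt - gradient f q + (1 / α) • (q - p)‖ ^ 2 ≤
      (2 / α + (2 * Lf ^ 2 + 3 * Lf / α) * (2 * α / (2 - α * (Lf + η)))) *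
          ((f p + r p) - (f q + r q)) +
        (2 + (2 * Lf ^ 2 + 3 * Lf / α) * (2 * α / (2 - α * (Lf + η))) / (2 * η)) *
          ‖gradient f p - gt‖ ^ 2 := by
  set d := q - p with hd
  set e := gradient f p - gt with he
  set u := gradient f p - gradient f q with hu
  -- strong prox inequality at c = p
  have h0 := prox_strong_s11 r hr α hα.le (p - α • gt) q p hmin
  have h1 : q - (p - α • gt) = d + α • gt := by rw [hd]; abel
  have h2 : p - (p - α • gt) = α • gt := by abel
  have h3 : ‖d + α • gt‖ ^ 2 = ‖d‖ ^ 2 + 2 * (α * ⟪gt, d⟫) + ‖α • gt‖ ^ 2 := by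
    rw [norm_add_sq_real, real_inner_smul_right, real_inner_comm]
  rw [h1, h2] at h0
  rw [h3] at h0
  have h4 : ‖p - q‖ = ‖d‖ := by rw [hd, norm_sub_rev]
  rw [h4] at h0
  have hP : r q - r p ≤ -⟪gt, d⟫ - (1 / α) * ‖d‖ ^ 2 := by
    have h5 : (r q - r p + ⟪gt, d⟫) * α ≤ -‖d‖ ^ 2 := by nlinarith [h0]
    have h6 : r q - r p + ⟪gt, d⟫ ≤ -‖d‖ ^ 2 / α := (le_div_iff₀ hα).mpr h5
    have h7 : -‖d‖ ^ 2 / α = -((1 / α) * ‖d‖ ^ 2) := by ring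
    linarith [h7 ▸ h6]
  have hdes : f q ≤ f p + ⟪gradient f p, d⟫ + Lf / 2 * ‖d‖ ^ 2 := by
    have := descent_aux f hf Lf hLip p q
    rwa [← hd] at this
  have hi : -((f p + r p) - (f q + r q)) + (1 / α - Lf / 2) * ‖d‖ ^ 2 ≤ ⟪e, d⟫ := by
    have hsub : ⟪e, d⟫ = ⟪gradient f p, d⟫ - ⟪gt, d⟫ := by rw [he, inner_sub_left]
    nlinarith [hP, hdes, hsub]
  have hGeq : gt - gradient f q + (1 / α) • d = (u - e) + (1 / α) • d := by
    rw [hu, he]; abel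
  have hG2 : ‖gt - gradient f q + (1 / α) • d‖ ^ 2 =
      (‖u‖ ^ 2 - 2 * ⟪u, e⟫ + ‖e‖ ^ 2) + 2 * ((1 / α) * (⟪u, d⟫ - ⟪e, d⟫)) +
        (1 / α) ^ 2 * ‖d‖ ^ 2 := by
    rw [hGeq, norm_add_sq_real, norm_sub_sq_real, real_inner_smul_right,
      norm_smul, Real.norm_eq_abs, abs_of_pos (by positivity : (0:ℝ) < 1 / α)]
    simp only [inner_sub_left]
    ring
  have hU' : ‖u‖ ≤ Lf * ‖d‖ := by
    calc ‖u‖ ≤ Lf * ‖p - q‖ := hLip p q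
      _ = Lf * ‖d‖ := by rw [h4]
  have hIeu : -(‖u‖ * ‖e‖) ≤ ⟪u, e⟫ := (abs_le.mp (abs_real_inner_le_norm u e)).1
  have hIud : ⟪u, d⟫ ≤ ‖u‖ * ‖d‖ := real_inner_le_norm u d
  have hIed' : ⟪e, d⟫ ≤ ‖e‖ * ‖d‖ := real_inner_le_norm e d
  exact arith_core Lf α η ‖e‖ ‖d‖ ((f p + r p) - (f q + r q))
    (‖gt - gradient f q + (1 / α) • d‖ ^ 2) ⟪u, e⟫ ⟪e, d⟫ ⟪u, d⟫ ‖u‖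
    hα hη hss hL (norm_nonneg _) (norm_nonneg _) (norm_nonneg _) hG2 hi hU' hIeu hIud hIed'



/-- Deterministic core of Theorem 1: for the inexact proximal gradient iterates
`θ^{t+1} = prox_{αr}(θ^t - α g^t)` of `F = f + r`, with
`β = (2 L_f² + 3 L_f/α) (2α/(2 - α(L_f + η)))`, the cumulative squared stationarity
measure is controlled by the initial suboptimality and the cumulative squared gradient
errors. -/
theorem prox_inexact_cumulative_stationarity
    {n : ℕ} (f : EuclideanSpace ℝ (Fin n) → ℝ) (hf : Differentiable ℝ f)
    (Lf : ℝ) (hLip : ∀ x y, ‖gradient f x - gradient f y‖ ≤ Lf * ‖x - y‖)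
    (r : EuclideanSpace ℝ (Fin n) → ℝ) (hr : ConvexOn ℝ Set.univ r)
    (α η : ℝ) (hα : 0 < α) (hη : 0 < η) (hstep_size : α * (Lf + η) < 2)
    (T : ℕ) (g θ : ℕ → EuclideanSpace ℝ (Fin n))
    (hstep : ∀ t ≤ T, ∀ θ',
      α * r (θ (t + 1)) + (1 / 2) * ‖θ (t + 1) - (θ t - α • g t)‖ ^ 2 ≤
        α * r θ' + (1 / 2) * ‖θ' - (θ t - α • g t)‖ ^ 2) :
    ∑ t ∈ Finset.range (T + 1), ‖g t - gradient f (θ (t + 1)) + (1 / α) • (θ (t + 1) - θ t)‖ ^ 2 ≤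
      (2 / α + (2 * Lf ^ 2 + 3 * Lf / α) * (2 * α / (2 - α * (Lf + η)))) *
          ((f (θ 0) + r (θ 0)) - (f (θ (T + 1)) + r (θ (T + 1)))) +
        (2 + (2 * Lf ^ 2 + 3 * Lf / α) * (2 * α / (2 - α * (Lf + η))) / (2 * η)) *
          ∑ t ∈ Finset.range (T + 1), ‖gradient f (θ t) - g t‖ ^ 2 := by
  rcases Nat.eq_zero_or_pos n with hn | hn
  · subst hn
    haveI : Subsingleton (EuclideanSpace ℝ (Fin 0)) := ⟨fun a b => PiLp.ext fun i => i.elim0⟩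
    have hz : ∀ v : EuclideanSpace ℝ (Fin 0), v = 0 := fun v => Subsingleton.elim v 0
    have hL : (∑ t ∈ Finset.range (T + 1),
        ‖g t - gradient f (θ (t + 1)) + (1 / α) • (θ (t + 1) - θ t)‖ ^ 2) = 0 :=
      Finset.sum_eq_zero fun t _ => by
        rw [hz (g t - gradient f (θ (t + 1)) + (1 / α) • (θ (t + 1) - θ t)), norm_zero]
        norm_num
    have hE : (∑ t ∈ Finset.range (T + 1), ‖gradient f (θ t) - g t‖ ^ 2) = 0 :=
      Finset.sum_eq_zero fun t _ => by
        rw [hz (gradient f (θ t) - g t), norm_zero]; norm_num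
    have hF : f (θ 0) + r (θ 0) - (f (θ (T + 1)) + r (θ (T + 1))) = 0 := by
      rw [hz (θ 0), hz (θ (T + 1))]; ring
    rw [hL, hE, hF]
    norm_num
  · have hL : 0 ≤ Lf := by
      have h := hLip 0 (EuclideanSpace.single ⟨0, hn⟩ (1:ℝ))
      have hnorm1 : ‖(0 : EuclideanSpace ℝ (Fin n)) - EuclideanSpace.single ⟨0, hn⟩ (1:ℝ)‖ = 1 := by
        rw [zero_sub, norm_neg, EuclideanSpace.norm_single]; norm_num
      rw [hnorm1, mul_one] at h
      linarith [norm_nonneg (gradient f 0 - gradient f (EuclideanSpace.single ⟨0, hn⟩ (1:ℝ)))]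
    calc ∑ t ∈ Finset.range (T + 1),
          ‖g t - gradient f (θ (t + 1)) + (1 / α) • (θ (t + 1) - θ t)‖ ^ 2
        ≤ ∑ t ∈ Finset.range (T + 1),
          ((2 / α + (2 * Lf ^ 2 + 3 * Lf / α) * (2 * α / (2 - α * (Lf + η)))) *
              ((f (θ t) + r (θ t)) - (f (θ (t + 1)) + r (θ (t + 1)))) +
            (2 + (2 * Lf ^ 2 + 3 * Lf / α) * (2 * α / (2 - α * (Lf + η))) / (2 * η)) *
              ‖gradient f (θ t) - g t‖ ^ 2) := by
          apply Finset.sum_le_sum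
          intro t ht
          exact step_bound f hf Lf hL hLip r hr α η hα hη hstep_size (g t) (θ t) (θ (t + 1))
            (hstep t (Finset.mem_range_succ_iff.mp ht))
      _ = (2 / α + (2 * Lf ^ 2 + 3 * Lf / α) * (2 * α / (2 - α * (Lf + η)))) *
            ((f (θ 0) + r (θ 0)) - (f (θ (T + 1)) + r (θ (T + 1)))) +
          (2 + (2 * Lf ^ 2 + 3 * Lf / α) * (2 * α / (2 - α * (Lf + η))) / (2 * η)) *
            ∑ t ∈ Finset.range (T + 1), ‖gradient f (θ t) - g t‖ ^ 2 := by
          rw [Finset.sum_add_distrib, ← Finset.mul_sum, ← Finset.mul_sum,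
            Finset.sum_range_sub' (fun t => f (θ t) + r (θ t))]
end
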